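/- arXiv:1206.5436 — 3 statements merged into one kernel-verified Lean document; each statement's English description precedes it below -/
import Mathlib

section
/- In a slim semimodular lattice (a finite semimodular lattice whose set of join-irreducible elements contains no three-element antichain), every element has at most two covers. -/
/-!
Choose, for each cover `yᵢ` of `x`, a join-irreducible `pᵢ ≤ yᵢ` with `pᵢ ≰ x`. Distinct covers
of `x` meet in `x`, so `pᵢ ≤ pⱼ` for `i ≠ j` would give `pᵢ ≤ yᵢ ⊓ yⱼ = x`. Hence three distinct
covers would yield a three-element antichain of join-irreducibles.
-/

section

variable {L : Type*} [Lattice L]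

/-- A minimal element of `{p | p ≤ y ∧ ¬ p ≤ x}` is join-irreducible. -/
theorem exists_supIrred_le_not_le [WellFoundedLT L] {x y : L} (h : ¬ y ≤ x) :
    ∃ p, SupIrred p ∧ p ≤ y ∧ ¬ p ≤ x := by
  obtain ⟨p, ⟨hpy, hpx⟩, hmin⟩ :=
    wellFounded_lt.has_min {p : L | p ≤ y ∧ ¬ p ≤ x} ⟨y, le_rfl, h⟩
  have below : ∀ q < p, q ≤ x := fun q hq => by_contra fun hqx => hmin q ⟨hq.le.trans hpy, hqx⟩ hq
  refine ⟨p, ⟨fun hp => hpx ((hp inf_le_left).trans inf_le_right), fun b c hbc => ?_⟩, hpy, hpx⟩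
  by_contra! hne
  have hb : b < p := lt_of_le_of_ne (hbc ▸ le_sup_left) hne.1
  have hc : c < p := lt_of_le_of_ne (hbc ▸ le_sup_right) hne.2
  exact hpx (hbc ▸ sup_le (below b hb) (below c hc))

theorem not_le_of_covBy_of_ne {x a b p q : L} (ha : x ⋖ a) (hb : x ⋖ b) (hab : a ≠ b)
    (hpa : p ≤ a) (hpx : ¬ p ≤ x) (hqb : q ≤ b) : ¬ p ≤ q := fun hpq =>
  hpx ((le_inf hpa (hpq.trans hqb)).trans (ha.wcovBy.inf_eq hb.wcovBy hab).le)

end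

theorem stmt_0_general {L : Type*} [Lattice L] [Fintype L]
    (slim : ¬ ∃ a b c : L, SupIrred a ∧ SupIrred b ∧ SupIrred c ∧
      ¬ a ≤ b ∧ ¬ b ≤ a ∧ ¬ a ≤ c ∧ ¬ c ≤ a ∧ ¬ b ≤ c ∧ ¬ c ≤ b)
    (x y₁ y₂ y₃ : L) (h₁ : x ⋖ y₁) (h₂ : x ⋖ y₂) (h₃ : x ⋖ y₃) :
    y₁ = y₂ ∨ y₁ = y₃ ∨ y₂ = y₃ := by
  by_contra! ⟨h12, h13, h23⟩
  obtain ⟨p₁, hp₁, hp₁y, hp₁x⟩ := exists_supIrred_le_not_le h₁.lt.not_ge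
  obtain ⟨p₂, hp₂, hp₂y, hp₂x⟩ := exists_supIrred_le_not_le h₂.lt.not_ge
  obtain ⟨p₃, hp₃, hp₃y, hp₃x⟩ := exists_supIrred_le_not_le h₃.lt.not_ge
  exact slim ⟨p₁, p₂, p₃, hp₁, hp₂, hp₃,
    not_le_of_covBy_of_ne h₁ h₂ h12 hp₁y hp₁x hp₂y,
    not_le_of_covBy_of_ne h₂ h₁ h12.symm hp₂y hp₂x hp₁y,
    not_le_of_covBy_of_ne h₁ h₃ h13 hp₁y hp₁x hp₃y,
    not_le_of_covBy_of_ne h₃ h₁ h13.symm hp₃y hp₃x hp₁y,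
    not_le_of_covBy_of_ne h₂ h₃ h23 hp₂y hp₂x hp₃y,
    not_le_of_covBy_of_ne h₃ h₂ h23.symm hp₃y hp₃x hp₂y⟩

/-- In a slim semimodular lattice (a finite semimodular lattice whose set of
join-irreducible elements contains no three-element antichain), every element
has at most two covers. -/
theorem stmt_0 {L : Type*} [Lattice L] [Fintype L]
    (semimod : ∀ a b : L, a ⊓ b ⋖ a → b ⋖ a ⊔ b)
    (slim : ¬ ∃ a b c : L, SupIrred a ∧ SupIrred b ∧ SupIrred c ∧
      ¬ a ≤ b ∧ ¬ b ≤ a ∧ ¬ a ≤ c ∧ ¬ c ≤ a ∧ ¬ b ≤ c ∧ ¬ c ≤ b)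
    (x y₁ y₂ y₃ : L) (h₁ : x ⋖ y₁) (h₂ : x ⋖ y₂) (h₃ : x ⋖ y₃) :
    y₁ = y₂ ∨ y₁ = y₃ ∨ y₂ = y₃ :=
  stmt_0_general slim x y₁ y₂ y₃ h₁ h₂ h₃
end

section
/- Every slim finite lattice is planar, in the sense that its order can be embedded so that its Hasse diagram admits a planar drawing; concretely, a finite lattice whose join-irreducible elements form the union of two chains has order dimension at most 2. -/
/-! By the width-two case of Dilworth's theorem the join-irreducibles of a slim lattice are
covered by two chains `C₁`, `C₂`. Sending `x` to the numbers of elements of `C₁` and of `C₂`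
below `x` is monotone, and it reflects the order: in a finite lattice `x ≤ y` as soon as every
join-irreducible below `x` lies below `y`, and inside a chain the elements below `x` are
determined by how many there are. -/

open Finset

section WidthTwo

variable {α : Type*} [PartialOrder α]

lemma IsChain.exists_forall_le_of_finset {C : Finset α} (hC : IsChain (· ≤ ·) (C : Set α))
    (hne : C.Nonempty) : ∃ m ∈ C, ∀ x ∈ C, x ≤ m := by
  obtain ⟨m, hm, hmax⟩ := C.exists_maximal hne
  exact ⟨m, hm, fun x hx => (hC.total hx hm).elim id (hmax hx)⟩

variable [DecidableEq α]

lemma exists_chain_cover_insert {S C₁ C₂ : Finset α} (a : α) (hS : C₁ ∪ C₂ = S)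
    (h₁ : IsChain (· ≤ ·) (C₁ : Set α)) (h₂ : IsChain (· ≤ ·) (C₂ : Set α))
    (ha : ∀ x ∈ C₁, (∃ y ∈ S, IncompRel (· ≤ ·) x y) → x ≤ a) :
    ∃ D₁ D₂ : Finset α, D₁ ∪ D₂ = insert a S ∧
      IsChain (· ≤ ·) (D₁ : Set α) ∧ IsChain (· ≤ ·) (D₂ : Set α) := by
  classical
  subst hS
  -- Elements comparable to all others can join `C₂`; the remaining ones of `C₁` lie below `a`.
  set K := (C₁ ∪ C₂).filter fun x => ∀ y ∈ C₁ ∪ C₂, ¬IncompRel (· ≤ ·) x y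
  refine ⟨insert a (C₁ \ K), C₂ ∪ K, ?_, ?_, ?_⟩
  · ext z
    have hK : K ⊆ C₁ ∪ C₂ := filter_subset _ _
    by_cases hz : z ∈ K
    · simp only [mem_union, mem_insert, mem_sdiff, hz, hK hz]
      tauto
    · simp only [mem_union, mem_insert, mem_sdiff, hz]
      tauto
  · rw [coe_insert, coe_sdiff]
    refine (h₁.mono Set.sdiff_subset).insert fun x hx _ => Or.inr (ha x hx.1 ?_)
    by_contra! hcomp
    exact hx.2 (mem_filter.2 ⟨mem_union_left _ hx.1, hcomp⟩)
  · have hK : ∀ x ∈ K, ∀ y ∈ C₁ ∪ C₂, x ≤ y ∨ y ≤ x := fun x hx y hy => by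
      by_contra! h
      exact (mem_filter.1 hx).2 y hy h
    have hD₂ : C₂ ∪ K ⊆ C₁ ∪ C₂ := union_subset subset_union_right (filter_subset _ _)
    intro x hx y hy _
    rw [coe_union, Set.mem_union, mem_coe, mem_coe] at hx
    rcases hx with hx | hx
    · rcases (mem_union.1 (mem_coe.1 hy)) with hy | hy
      · exact h₂.total hx hy
      · exact (hK y hy x (mem_union_right _ hx)).symm
    · exact hK x hx y (hD₂ hy)

lemma not_le_of_chain_cover {S C₁ C₂ : Finset α} (hS : C₁ ∪ C₂ = S)
    (h₁ : IsChain (· ≤ ·) (C₁ : Set α)) {a₁ a₂ : α} (ha₁ : a₁ ∈ C₁)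
    (hinc₁ : ∃ y ∈ S, IncompRel (· ≤ ·) a₁ y)
    (ha₂ : ∀ x ∈ C₂, (∃ y ∈ S, IncompRel (· ≤ ·) x y) → x ≤ a₂) : ¬a₂ ≤ a₁ := by
  subst hS
  obtain ⟨c, hc, hinc⟩ := hinc₁
  have hc₂ : c ∈ C₂ := (mem_union.1 hc).resolve_left fun hc₁ => not_or.2 hinc (h₁.total ha₁ hc₁)
  exact fun h => hinc.2 ((ha₂ c hc₂ ⟨a₁, mem_union_left _ ha₁, hinc.symm⟩).trans h)

theorem Finset.exists_chain_cover_of_width_le_two (S : Finset α)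
    (hS : ∀ a ∈ S, ∀ b ∈ S, ∀ c ∈ S,
      IncompRel (· ≤ ·) a b → IncompRel (· ≤ ·) a c → ¬IncompRel (· ≤ ·) b c) :
    ∃ C₁ C₂ : Finset α, C₁ ∪ C₂ = S ∧
      IsChain (· ≤ ·) (C₁ : Set α) ∧ IsChain (· ≤ ·) (C₂ : Set α) := by
  classical
  induction S using Finset.strongInduction with
  | H S ih =>
  rcases S.eq_empty_or_nonempty with rfl | hne
  · exact ⟨∅, ∅, by simp, by simp, by simp⟩
  obtain ⟨a, haS, hamax⟩ := S.exists_maximal hne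
  have hS' : S.erase a ⊆ S := erase_subset _ _
  obtain ⟨C₁, C₂, hC, h₁, h₂⟩ := ih _ (erase_ssubset haS)
    fun x hx y hy z hz => hS x (hS' hx) y (hS' hy) z (hS' hz)
  rw [← insert_erase haS]
  set P : α → Prop := fun x => ∃ y ∈ S.erase a, IncompRel (· ≤ ·) x y
  by_cases hC₁ : ∀ x ∈ C₁, P x → x ≤ a
  · exact exists_chain_cover_insert a hC h₁ h₂ hC₁
  by_cases hC₂ : ∀ x ∈ C₂, P x → x ≤ a
  · exact exists_chain_cover_insert a ((union_comm _ _).trans hC) h₂ h₁ hC₂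
  -- Otherwise the greatest elements of `C₁` and `C₂` lying in a two-element antichain form,
  -- together with `a`, a three-element antichain.
  push Not at hC₁ hC₂
  obtain ⟨x₁, hx₁, hinc₁, hx₁a⟩ := hC₁
  obtain ⟨x₂, hx₂, hinc₂, hx₂a⟩ := hC₂
  obtain ⟨a₁, ha₁, ha₁max⟩ :=
    (h₁.mono (coe_subset.2 (filter_subset P _))).exists_forall_le_of_finset
      ⟨x₁, mem_filter.2 ⟨hx₁, hinc₁⟩⟩
  obtain ⟨a₂, ha₂, ha₂max⟩ :=
    (h₂.mono (coe_subset.2 (filter_subset P _))).exists_forall_le_of_finset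
      ⟨x₂, mem_filter.2 ⟨hx₂, hinc₂⟩⟩
  rw [mem_filter] at ha₁ ha₂
  have hx₁a₁ := ha₁max x₁ (mem_filter.2 ⟨hx₁, hinc₁⟩)
  have hx₂a₂ := ha₂max x₂ (mem_filter.2 ⟨hx₂, hinc₂⟩)
  have ha₁S : a₁ ∈ S := hS' (hC ▸ mem_union_left _ ha₁.1)
  have ha₂S : a₂ ∈ S := hS' (hC ▸ mem_union_right _ ha₂.1)
  refine (hS a haS a₁ ha₁S a₂ ha₂S ?_ ?_ ⟨?_, ?_⟩).elim
  · exact ⟨fun h => hx₁a (hx₁a₁.trans (hamax ha₁S h)), fun h => hx₁a (hx₁a₁.trans h)⟩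
  · exact ⟨fun h => hx₂a (hx₂a₂.trans (hamax ha₂S h)), fun h => hx₂a (hx₂a₂.trans h)⟩
  · exact not_le_of_chain_cover ((union_comm _ _).trans hC) h₂ ha₂.1 ha₂.2
      fun x hx hinc => ha₁max x (mem_filter.2 ⟨hx, hinc⟩)
  · exact not_le_of_chain_cover hC h₁ ha₁.1 ha₁.2
      fun x hx hinc => ha₂max x (mem_filter.2 ⟨hx, hinc⟩)

end WidthTwo

lemma le_of_forall_supIrred_le {L : Type*} [Lattice L] [WellFoundedLT L] {a b : L}
    (h : ∀ j, SupIrred j → j ≤ a → j ≤ b) : a ≤ b := by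
  induction a using WellFoundedLT.induction with
  | ind a ih =>
  by_cases ha : SupIrred a
  · exact h a ha le_rfl
  rcases not_supIrred.1 ha with hmin | ⟨u, v, rfl, hu, hv⟩
  · exact (hmin inf_le_left).trans inf_le_right
  · exact sup_le (ih u hu fun j hj hju => h j hj (hju.trans hu.le))
      (ih v hv fun j hj hjv => h j hj (hjv.trans hv.le))

section ChainRank

variable {α : Type*} [PartialOrder α] [DecidableLE α]

def chainRank (C : Finset α) (x : α) : Fin (#C + 1) :=
  ⟨#{c ∈ C | c ≤ x}, Nat.lt_succ_of_le (card_filter_le _ _)⟩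

lemma chainRank_mono (C : Finset α) : Monotone (chainRank C) := fun _ _ hxy =>
  Fin.mk_le_mk.2 (card_le_card (monotone_filter_right _ fun _ _ h => h.trans hxy))

lemma IsChain.le_of_chainRank_le {C : Finset α} (hC : IsChain (· ≤ ·) (C : Set α))
    {c x y : α} (hc : c ∈ C) (hcx : c ≤ x) (h : chainRank C x ≤ chainRank C y) : c ≤ y := by
  by_contra hcy
  have hlt : {z ∈ C | z ≤ y} ⊂ {z ∈ C | z ≤ x} := by
    refine (ssubset_iff_of_subset fun z hz => ?_).2
      ⟨c, mem_filter.2 ⟨hc, hcx⟩, fun hc' => hcy (mem_filter.1 hc').2⟩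
    obtain ⟨hzC, hzy⟩ := mem_filter.1 hz
    refine mem_filter.2 ⟨hzC, ?_⟩
    exact (hC.total hzC hc).elim (·.trans hcx) fun hcz => absurd (hcz.trans hzy) hcy
  exact (card_lt_card hlt).not_ge (Fin.mk_le_mk.1 h)

end ChainRank

/-- Every slim finite lattice has order dimension at most 2: a finite lattice
whose join-irreducible elements contain no three-element antichain (equivalently,
form the union of two chains) order-embeds into a product of two finite chains. -/
theorem stmt_10 {L : Type*} [Lattice L] [Fintype L]
    (slim : ¬ ∃ a b c : L, SupIrred a ∧ SupIrred b ∧ SupIrred c ∧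
      ¬ a ≤ b ∧ ¬ b ≤ a ∧ ¬ a ≤ c ∧ ¬ c ≤ a ∧ ¬ b ≤ c ∧ ¬ c ≤ b) :
    ∃ (m n : ℕ) (f : L → Fin m × Fin n), ∀ x y : L, x ≤ y ↔ f x ≤ f y := by
  classical
  obtain ⟨C₁, C₂, hC, h₁, h₂⟩ := exists_chain_cover_of_width_le_two {j : L | SupIrred j}
    fun a ha b hb c hc hab hac hbc => slim ⟨a, b, c, (mem_filter.1 ha).2, (mem_filter.1 hb).2,
      (mem_filter.1 hc).2, hab.1, hab.2, hac.1, hac.2, hbc.1, hbc.2⟩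
  refine ⟨#C₁ + 1, #C₂ + 1, fun x => (chainRank C₁ x, chainRank C₂ x), fun x y => ⟨?_, ?_⟩⟩
  · exact fun hxy => ⟨chainRank_mono C₁ hxy, chainRank_mono C₂ hxy⟩
  · rintro ⟨hxy₁, hxy₂⟩
    refine le_of_forall_supIrred_le fun j hj hjx => ?_
    have hjC : j ∈ C₁ ∪ C₂ := hC ▸ mem_filter.2 ⟨mem_univ j, hj⟩
    rcases mem_union.1 hjC with hj₁ | hj₂
    · exact h₁.le_of_chainRank_le hj₁ hjx hxy₁
    · exact h₂.le_of_chainRank_le hj₂ hjx hxy₂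
end

section
/- Let L be a finite slim semimodular lattice and let x ∈ L be doubly irreducible (x has exactly one lower cover x_* and exactly one upper cover x^*) with x incomparable to some element of L. Then L \ {x} is a cover-preserving sublattice of L and is again slim and semimodular. -/
/-!
Because `x` has a unique lower cover `xlow` and a unique upper cover `xup`, every element below
`x` lies below `xlow` and every element above `x` lies above `xup`; so `x` is doubly irreducible
and `L \ {x}` is a sublattice. A cover `a ⋖ b` of the sublattice fails to be a cover of `L` only
if `a ≤ xlow < x < xup ≤ b`, so covers are preserved once `[xlow, xup]` contains some `z ≠ x`.
Semimodularity provides `z`: for `y` incomparable to `x`, a minimal `c' ≤ y` with `c' ≰ x` gives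
`xlow ⋖ xlow ⊔ c' =: z`, and then `z ⋖ x ⊔ z = xup`. Preserved covers make the sublattice
semimodular. Finally, a join-irreducible of the sublattice other than `xup` is join-irreducible
in `L`, so replacing `xup` by `x` carries a three-element antichain of join-irreducibles of the
sublattice to one of `L`.
-/

open OrderDual

section UniqueCover

variable {α : Type*} {x y z : α}

theorem le_of_lt_of_forall_covBy_eq [PartialOrder α] [IsStronglyCoatomic α]
    (hy : ∀ w, w ⋖ x → w = y) (hz : z < x) : z ≤ y := by
  obtain ⟨w, hzw, hwx⟩ := exists_le_covBy_of_lt hz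
  exact hy w hwx ▸ hzw

theorem le_of_lt_of_forall_covBy_eq' [PartialOrder α] [IsStronglyAtomic α]
    (hy : ∀ w, x ⋖ w → w = y) (hz : x < z) : y ≤ z :=
  le_of_lt_of_forall_covBy_eq (α := αᵒᵈ) (x := toDual x)
    (fun w hw => hy (ofDual w) (toDual_covBy_toDual_iff.1 hw)) hz

theorem supIrred_of_forall_covBy_eq [Lattice α] [IsStronglyCoatomic α]
    (hyx : y ⋖ x) (hy : ∀ w, w ⋖ x → w = y) : SupIrred x := by
  refine ⟨hyx.lt.not_isMin, fun a b hab => ?_⟩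
  by_contra! hne
  have ha := le_of_lt_of_forall_covBy_eq hy ((hab ▸ le_sup_left).lt_of_ne hne.1)
  have hb := le_of_lt_of_forall_covBy_eq hy ((hab ▸ le_sup_right).lt_of_ne hne.2)
  exact hyx.lt.not_ge (hab ▸ sup_le ha hb)

theorem infIrred_of_forall_covBy_eq [Lattice α] [IsStronglyAtomic α]
    (hxy : x ⋖ y) (hy : ∀ w, x ⋖ w → w = y) : InfIrred x :=
  supIrred_toDual.1 <| supIrred_of_forall_covBy_eq (α := αᵒᵈ) (y := toDual y)
    (toDual_covBy_toDual_iff.2 hxy) (fun w hw => hy (ofDual w) (toDual_covBy_toDual_iff.1 hw))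

end UniqueCover

def IsSlim (α : Type*) [Lattice α] : Prop :=
  ¬ ∃ a b c : α, SupIrred a ∧ SupIrred b ∧ SupIrred c ∧
    ¬ a ≤ b ∧ ¬ b ≤ a ∧ ¬ a ≤ c ∧ ¬ c ≤ a ∧ ¬ b ≤ c ∧ ¬ c ≤ b

theorem IsSlim.of_map {α β : Type*} [Lattice α] [Lattice β] (h : IsSlim β) (f : α → β)
    (hf : ∀ a, SupIrred a → SupIrred (f a)) (hle : ∀ a b, f a ≤ f b → a ≤ b) : IsSlim α :=
  fun ⟨a, b, c, ha, hb, hc, hab, hba, hac, hca, hbc, hcb⟩ =>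
    h ⟨f a, f b, f c, hf a ha, hf b hb, hf c hc, mt (hle a b) hab, mt (hle b a) hba,
      mt (hle a c) hac, mt (hle c a) hca, mt (hle b c) hbc, mt (hle c b) hcb⟩

namespace Sublattice

variable {L : Type*} [Lattice L]

theorem isUpperModularLattice_of_covBy_coe [IsUpperModularLattice L] (S : Sublattice L)
    (hS : ∀ a b : S, a ⋖ b → (a : L) ⋖ b) : IsUpperModularLattice S where
  covBy_sup_of_inf_covBy h :=
    CovBy.of_image (OrderEmbedding.subtype _) (covBy_sup_of_inf_covBy_left (hS _ _ h))

variable {x : L} {hs : SupIrred x} {hi : InfIrred x}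

def complSingleton (hs : SupIrred x) (hi : InfIrred x) : Sublattice L where
  carrier := {x}ᶜ
  supClosed' _ ha _ hb hab := (hs.2 hab).elim ha hb
  infClosed' _ ha _ hb hab := (hi.2 hab).elim ha hb

theorem coe_covBy_coe_complSingleton [IsStronglyAtomic L] [IsStronglyCoatomic L] {xlow xup z : L}
    (hlowu : ∀ w, w ⋖ x → w = xlow) (hupu : ∀ w, x ⋖ w → w = xup)
    (hzx : z ≠ x) (hlz : xlow < z) (hzu : z < xup)
    {a b : complSingleton hs hi} (hab : a ⋖ b) : (a : L) ⋖ b := by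
  refine ⟨hab.lt, fun c hac hcb => ?_⟩
  by_cases hcx : c = x
  · subst hcx
    exact hab.2 (c := ⟨z, hzx⟩) ((le_of_lt_of_forall_covBy_eq hlowu hac).trans_lt hlz)
      (hzu.trans_le (le_of_lt_of_forall_covBy_eq' hupu hcb))
  · exact hab.2 (c := ⟨c, hcx⟩) hac hcb

theorem supIrred_coe_of_ne [IsStronglyAtomic L] {xup : L} (hupu : ∀ w, x ⋖ w → w = xup)
    {a : complSingleton hs hi} (ha : SupIrred a) (hne : (a : L) ≠ xup) : SupIrred (a : L) := by
  have lift {u v : L} (hu : u ≠ x) (hv : v ≠ x) (huv : u ⊔ v = a) : u = a ∨ v = a :=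
    (ha.2 (show (⟨u, hu⟩ ⊔ ⟨v, hv⟩ : complSingleton hs hi) = a from Subtype.ext huv)).imp
      (congrArg Subtype.val) (congrArg Subtype.val)
  have sup_x (v : L) (hv : x ⊔ v = a) : v = a := by
    have hxa : x < a := (hv ▸ le_sup_left).lt_of_ne (Ne.symm a.2)
    obtain ⟨w, hxw, hwa⟩ := exists_covBy_le_of_lt hxa
    have hvx : v ≠ x := fun h => a.2 (by rw [← hv, h, sup_idem]; rfl)
    have hwv : w ⊔ v = a := le_antisymm (sup_le hwa (hv ▸ le_sup_right))
      (hv ▸ sup_le_sup_right hxw.le v)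
    exact (lift hxw.lt.ne' hvx hwv).resolve_left fun h => hne (h ▸ hupu w hxw)
  refine ⟨fun hmin => ha.1 fun b hb => hmin hb, fun u v huv => ?_⟩
  by_cases hux : u = x
  · rw [hux] at huv
    exact .inr (sup_x v huv)
  by_cases hvx : v = x
  · rw [hvx, sup_comm] at huv
    exact .inl (sup_x u huv)
  exact lift hux hvx huv

theorem isSlim_complSingleton [IsStronglyAtomic L] {xup : L} (hup : x ⋖ xup)
    (hupu : ∀ w, x ⋖ w → w = xup) (h : IsSlim L) : IsSlim (complSingleton hs hi) := by
  classical
  refine h.of_map (fun a => Function.update id xup x (a : L)) (fun a ha => ?_) (fun a b hab => ?_)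
  · by_cases hax : (a : L) = xup
    · simpa [hax] using hs
    · simpa [hax] using supIrred_coe_of_ne hupu ha hax
  · by_cases ha : (a : L) = xup <;> by_cases hb : (b : L) = xup <;>
      simp only [ha, hb, Function.update_self, Function.update_of_ne, ne_eq, not_false_eq_true,
        id_eq] at hab
    · exact (Subtype.ext (ha.trans hb.symm)).le
    · rw [← Subtype.coe_le_coe, ha]
      exact le_of_lt_of_forall_covBy_eq' hupu (hab.lt_of_ne (Ne.symm b.2))
    · rw [← Subtype.coe_le_coe, hb]
      exact hab.trans hup.le
    · exact hab

end Sublattice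

section UpperModular

variable {L : Type*} [Lattice L] [IsUpperModularLattice L] {x xlow xup y : L}

theorem exists_covBy_not_le_of_not_le [WellFoundedLT L] [IsStronglyCoatomic L]
    (hlow : xlow ⋖ x) (hlowu : ∀ w, w ⋖ x → w = xlow) (hxy : ¬ x ≤ y) (hyx : ¬ y ≤ x) :
    ∃ z, xlow ⋖ z ∧ ¬ z ≤ x := by
  obtain ⟨c', hc'⟩ := exists_minimal_of_wellFoundedLT (fun w => w ≤ y ∧ ¬ w ≤ x) ⟨y, le_rfl, hyx⟩
  obtain ⟨c, -, hcc'⟩ := exists_le_covBy_of_lt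
    (inf_le_right.lt_of_ne fun h => hc'.1.2 (h ▸ inf_le_left) : x ⊓ c' < c')
  have hcy : c ≤ y := hcc'.le.trans hc'.1.1
  have hcx : c ≤ x := not_not.1 fun h => hc'.not_prop_of_lt hcc'.lt ⟨hcy, h⟩
  have hclow : c ≤ xlow :=
    le_of_lt_of_forall_covBy_eq hlowu (hcx.lt_of_ne fun h => hxy (h ▸ hcy))
  have hinf : c' ⊓ xlow = c :=
    (hcc'.eq_or_eq (le_inf hcc'.le hclow) inf_le_left).resolve_right fun h =>
      hc'.1.2 (h ▸ inf_le_right.trans hlow.le)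
  exact ⟨c' ⊔ xlow, covBy_sup_of_inf_covBy_left (hinf ▸ hcc'),
    fun h => hc'.1.2 (le_sup_left.trans h)⟩

theorem exists_ne_mem_Ioo_of_not_le [WellFoundedLT L] [IsStronglyCoatomic L]
    (hlow : xlow ⋖ x) (hlowu : ∀ w, w ⋖ x → w = xlow) (hupu : ∀ w, x ⋖ w → w = xup)
    (hxy : ¬ x ≤ y) (hyx : ¬ y ≤ x) : ∃ z, z ≠ x ∧ xlow < z ∧ z < xup := by
  obtain ⟨z, hlz, hzx⟩ := exists_covBy_not_le_of_not_le hlow hlowu hxy hyx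
  have hinf : x ⊓ z = xlow :=
    (hlz.eq_or_eq (le_inf hlow.le hlz.le) inf_le_right).resolve_right fun h =>
      hzx (h ▸ inf_le_left)
  have hup : z ⊔ x = xup := hupu _ (covBy_sup_of_inf_covBy_left (inf_comm x z ▸ hinf ▸ hlz))
  have hzup : z ⋖ x ⊔ z := covBy_sup_of_inf_covBy_left (hinf ▸ hlow)
  rw [sup_comm, hup] at hzup
  exact ⟨z, fun h => hzx h.le, hlz.lt, hzup.lt⟩

end UpperModular

/-- Removing a doubly irreducible element `x`, incomparable to some element,
from a finite slim semimodular lattice yields a cover-preserving sublattice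
that is again slim and semimodular. -/
theorem stmt_15 {L : Type*} [Lattice L] [Fintype L]
    (semimod : ∀ a b : L, a ⊓ b ⋖ a → b ⋖ a ⊔ b)
    (slim : ¬ ∃ a b c : L, SupIrred a ∧ SupIrred b ∧ SupIrred c ∧
      ¬ a ≤ b ∧ ¬ b ≤ a ∧ ¬ a ≤ c ∧ ¬ c ≤ a ∧ ¬ b ≤ c ∧ ¬ c ≤ b)
    (x xlow xup : L)
    (hlow : xlow ⋖ x) (hlowu : ∀ z : L, z ⋖ x → z = xlow)
    (hup : x ⋖ xup) (hupu : ∀ z : L, x ⋖ z → z = xup)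
    (hincomp : ∃ y : L, ¬ x ≤ y ∧ ¬ y ≤ x) :
    ∃ S : Sublattice L, (S : Set L) = {x}ᶜ ∧
      (∀ a b : ↥S, a ⋖ b → (a : L) ⋖ (b : L)) ∧
      (∀ a b : ↥S, a ⊓ b ⋖ a → b ⋖ a ⊔ b) ∧
      ¬ ∃ a b c : ↥S, SupIrred a ∧ SupIrred b ∧ SupIrred c ∧
        ¬ a ≤ b ∧ ¬ b ≤ a ∧ ¬ a ≤ c ∧ ¬ c ≤ a ∧ ¬ b ≤ c ∧ ¬ c ≤ b := by
  have : IsUpperModularLattice L := ⟨semimod _ _⟩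
  obtain ⟨y, hxy, hyx⟩ := hincomp
  obtain ⟨z, hzx, hlz, hzu⟩ := exists_ne_mem_Ioo_of_not_le hlow hlowu hupu hxy hyx
  let S := Sublattice.complSingleton (supIrred_of_forall_covBy_eq hlow hlowu)
    (infIrred_of_forall_covBy_eq hup hupu)
  have hcov (a b : S) : a ⋖ b → (a : L) ⋖ b :=
    Sublattice.coe_covBy_coe_complSingleton hlowu hupu hzx hlz hzu
  have := S.isUpperModularLattice_of_covBy_coe hcov
  exact ⟨S, rfl, hcov, fun _ _ => covBy_sup_of_inf_covBy_left,
    Sublattice.isSlim_complSingleton hup hupu slim⟩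
end
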